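/- arXiv:1810.03176 — 4 statements merged into one kernel-verified Lean document; each statement's English description precedes it below -/
import Mathlib

section
/- Let X = !![0, 1; 1, 0] and Z = !![1, 0; 0, -1] be 2×2 complex matrices, and let n be a positive natural number. For y : Fin n → {0,1} × {0,1}, define the n-qubit Pauli string P_y ∈ Matrix (Fin n → Fin 2) (Fin n → Fin 2) ℂ entrywise by P_y(i, j) = Π_{k} (X^{(y k).2} Z^{(y k).1})(i k, j k). Then for every ρ ∈ Matrix (Fin n → Fin 2) (Fin n → Fin 2) ℂ, the n-qubit Pauli twirl satisfies 4^{-n} · Σ_{y} P_y ρ P_yᴴ = (trace(ρ)/2^n) · I, where the sum runs over all y : Fin n → {0,1} × {0,1}, ᴴ denotes the conjugate transpose, and I is the identity matrix of size 2^n. -/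
open Matrix

/-- The Pauli `X` matrix. -/
noncomputable def pauliX : Matrix (Fin 2) (Fin 2) ℂ := !![0, 1; 1, 0]

/-- The Pauli `Z` matrix. -/
noncomputable def pauliZ : Matrix (Fin 2) (Fin 2) ℂ := !![1, 0; 0, -1]

/-- The `n`-qubit Pauli string `P_y`, the entrywise (Kronecker) tensor product of the
single-qubit matrices `X^{(y k).2} Z^{(y k).1}`. -/
noncomputable def pauliString {n : ℕ} (y : Fin n → Fin 2 × Fin 2) :
    Matrix (Fin n → Fin 2) (Fin n → Fin 2) ℂ :=
  fun i j => ∏ k : Fin n,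
    (pauliX ^ (((y k).2 : ℕ)) * pauliZ ^ (((y k).1 : ℕ))) (i k) (j k)

/-!
The four single-qubit Pauli matrices satisfy the completeness relation
`∑ₐ σₐ(i,k) · conj σₐ(j,l) = 2 δᵢⱼ δₖₗ`, which tensorises to `∑_y P_y(i,k) · conj P_y(j,l) = 2ⁿ δᵢⱼ δₖₗ`.
Expanding `(∑_y P_y ρ P_yᴴ)(i,j)` entrywise, any family of matrices with such a completeness
relation sends `ρ` to a multiple of `tr ρ • 1`.
-/

theorem Matrix.sum_mul_mul_conjTranspose_eq_smul_one {ι m R : Type*} [Fintype ι] [Fintype m]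
    [DecidableEq m] [CommSemiring R] [StarRing R] (P : ι → Matrix m m R) (c : R)
    (hP : ∀ i k j l, ∑ y, P y i k * star (P y j l) = if i = j ∧ k = l then c else 0)
    (ρ : Matrix m m R) :
    ∑ y, P y * ρ * (P y)ᴴ = (c * trace ρ) • (1 : Matrix m m R) := by
  ext i j
  calc (∑ y, P y * ρ * (P y)ᴴ) i j
      = ∑ l, ∑ k, ρ k l * ∑ y, P y i k * star (P y j l) := by
        simp only [sum_apply, mul_apply, conjTranspose_apply, Finset.sum_mul, Finset.mul_sum]
        rw [Finset.sum_comm]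
        refine Finset.sum_congr rfl fun l _ => ?_
        rw [Finset.sum_comm]
        exact Finset.sum_congr rfl fun k _ => Finset.sum_congr rfl fun y _ => by ring
    _ = ((c * trace ρ) • (1 : Matrix m m R)) i j := by
        by_cases hij : i = j
        · simp [hP, hij, trace, Finset.mul_sum, mul_comm]
        · simp [hP, hij]

noncomputable def pauliMatrix (a : Fin 2 × Fin 2) : Matrix (Fin 2) (Fin 2) ℂ :=
  pauliX ^ (a.2 : ℕ) * pauliZ ^ (a.1 : ℕ)

theorem pauliString_apply {n : ℕ} (y : Fin n → Fin 2 × Fin 2) (i j : Fin n → Fin 2) :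
    pauliString y i j = ∏ k, pauliMatrix (y k) (i k) (j k) :=
  rfl

theorem sum_pauliMatrix_mul_star (i k j l : Fin 2) :
    ∑ a, pauliMatrix a i k * star (pauliMatrix a j l) = if i = j ∧ k = l then 2 else 0 := by
  fin_cases i <;> fin_cases k <;> fin_cases j <;> fin_cases l <;>
    simp [Fintype.sum_prod_type, pauliMatrix, pauliX, pauliZ, pow_succ, mul_apply] <;> norm_num

theorem sum_pauliString_mul_star {n : ℕ} (i k j l : Fin n → Fin 2) :
    ∑ y : Fin n → Fin 2 × Fin 2, pauliString y i k * star (pauliString y j l)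
      = if i = j ∧ k = l then (2 : ℂ) ^ n else 0 := by
  simp only [pauliString_apply, star_prod, ← Finset.prod_mul_distrib]
  rw [← Fintype.prod_sum fun m a => pauliMatrix a (i m) (k m) * star (pauliMatrix a (j m) (l m))]
  simp only [sum_pauliMatrix_mul_star, Fintype.prod_ite_zero, Finset.prod_const, Finset.card_univ,
    Fintype.card_fin, funext_iff, forall_and]

theorem pauli_twirl_n_general (n : ℕ)
    (ρ : Matrix (Fin n → Fin 2) (Fin n → Fin 2) ℂ) :
    ((4 : ℂ) ^ n)⁻¹ • ∑ y : Fin n → Fin 2 × Fin 2,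
        pauliString y * ρ * (pauliString y)ᴴ
      = (Matrix.trace ρ / 2 ^ n) • (1 : Matrix (Fin n → Fin 2) (Fin n → Fin 2) ℂ) := by
  rw [sum_mul_mul_conjTranspose_eq_smul_one _ _ sum_pauliString_mul_star, smul_smul]
  congr 1
  rw [show (4 : ℂ) ^ n = 2 ^ n * 2 ^ n by rw [← mul_pow]; norm_num]
  field_simp

/-- `n`-qubit Pauli twirl: `4^{-n} Σ_y P_y ρ P_yᴴ = (tr ρ / 2^n) • I`. -/
theorem pauli_twirl_n (n : ℕ) (hn : 0 < n)
    (ρ : Matrix (Fin n → Fin 2) (Fin n → Fin 2) ℂ) :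
    ((4 : ℂ) ^ n)⁻¹ • ∑ y : Fin n → Fin 2 × Fin 2,
        pauliString y * ρ * (pauliString y)ᴴ
      = (Matrix.trace ρ / 2 ^ n) • (1 : Matrix (Fin n → Fin 2) (Fin n → Fin 2) ℂ) :=
  pauli_twirl_n_general n ρ
end

section
/- Let r, M be positive natural numbers, let l ≥ 0, let ε ∈ ℝ with 0 ≤ ε ≤ 1/2, and let q : ({0,1}^r) × ({0,1}^M) → ℝ be any function. Define the binary Fourier transform in the second argument, q̂(x, s) = 2^{-M} · Σ_{y ∈ {0,1}^M} (-1)^{s·y} q(x, y). Define the noisy function q'(x, y) = Σ_{s ∈ {0,1}^M} (1-2ε)^{wt(s)} (-1)^{s·y} q̂(x, s) and the truncated pseudo-function p'(x, y) = Σ_{s ∈ {0,1}^M, wt(s) < l} (1-2ε)^{wt(s)} (-1)^{s·y} q̂(x, s). Then the variance-type bound holds: 2^{-M} · Σ_{y ∈ {0,1}^M} ( Σ_{x ∈ {0,1}^r} |p'(x, y) - q'(x, y)| )² ≤ 2^r · (1-2ε)^{2l} · ( 2^{-M} · Σ_{x ∈ {0,1}^r} Σ_{y ∈ {0,1}^M}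 q(x, y)² ). -/
/-- The Hamming weight of `s ∈ {0,1}^M`: the number of coordinates equal to `1`. -/
def hammingWt {M : ℕ} (s : Fin M → Fin 2) : ℕ :=
  (Finset.univ.filter fun i => s i = 1).card

/-- Binary Fourier transform in the second argument:
`q̂(x,s) = 2^{-M} Σ_y (-1)^{s·y} q(x,y)`. -/
noncomputable def fourier2 {r M : ℕ} (q : (Fin r → Fin 2) → (Fin M → Fin 2) → ℝ)
    (x : Fin r → Fin 2) (s : Fin M → Fin 2) : ℝ :=
  ((2 : ℝ) ^ M)⁻¹ * ∑ y : Fin M → Fin 2,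
    (-1 : ℝ) ^ (∑ i, (s i).val * (y i).val) * q x y

/-- The noisy function: `q'(x,y) = Σ_s (1-2ε)^{wt s} (-1)^{s·y} q̂(x,s)`. -/
noncomputable def noisyFn {r M : ℕ} (ε : ℝ) (q : (Fin r → Fin 2) → (Fin M → Fin 2) → ℝ)
    (x : Fin r → Fin 2) (y : Fin M → Fin 2) : ℝ :=
  ∑ s : Fin M → Fin 2,
    (1 - 2 * ε) ^ hammingWt s * (-1 : ℝ) ^ (∑ i, (s i).val * (y i).val) * fourier2 q x s

/-- The truncated pseudo-function:
`p'(x,y) = Σ_{wt s < l} (1-2ε)^{wt s} (-1)^{s·y} q̂(x,s)`. -/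
noncomputable def truncFn {r M : ℕ} (ε : ℝ) (l : ℕ)
    (q : (Fin r → Fin 2) → (Fin M → Fin 2) → ℝ)
    (x : Fin r → Fin 2) (y : Fin M → Fin 2) : ℝ :=
  ∑ s ∈ Finset.univ.filter fun s : Fin M → Fin 2 => hammingWt s < l,
    (1 - 2 * ε) ^ hammingWt s * (-1 : ℝ) ^ (∑ i, (s i).val * (y i).val) * fourier2 q x s

/-!
The difference `q' - p'` is the part of the Walsh expansion of `q'(x, ·)` supported on characters
of weight at least `l`, where the noise factor `(1-2ε)^{wt s}` is at most `(1-2ε)^l` in absolute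
value. By Parseval, for each fixed `x` the mean square of `q' - p'` over `y` is therefore at most
`(1-2ε)^{2l}` times the mean square of `q(x, ·)`. Cauchy–Schwarz over the `2^r` values of `x`
turns the square of the `ℓ¹`-norm in `x` into `2^r` times the sum of the squares.
-/

open Finset

namespace Walsh

variable {M : ℕ}

noncomputable def walsh (s y : Fin M → Fin 2) : ℝ :=
  (-1) ^ ∑ i, (s i).val * (y i).val

noncomputable def walshCoeff (f : (Fin M → Fin 2) → ℝ) (s : Fin M → Fin 2) : ℝ :=
  ((2 : ℝ) ^ M)⁻¹ * ∑ y, walsh s y * f y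

theorem walsh_comm (s y : Fin M → Fin 2) : walsh s y = walsh y s := by
  simp only [walsh, Nat.mul_comm]

theorem sum_neg_one_pow_mul_add_mul (b c : Fin 2) :
    ∑ a : Fin 2, (-1 : ℝ) ^ (b.val * a.val + c.val * a.val) = if b = c then 2 else 0 := by
  fin_cases b <;> fin_cases c <;> norm_num [Fin.sum_univ_two]

theorem sum_walsh_mul_walsh (s t : Fin M → Fin 2) :
    ∑ y, walsh s y * walsh t y = if s = t then (2 : ℝ) ^ M else 0 := by
  have hprod : ∀ y, walsh s y * walsh t y
      = ∏ i, (-1 : ℝ) ^ ((s i).val * (y i).val + (t i).val * (y i).val) := fun y => by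
    rw [walsh, walsh, ← pow_add, ← sum_add_distrib, prod_pow_eq_pow_sum]
  simp only [hprod]
  rw [← Fintype.prod_sum fun i (a : Fin 2) => (-1 : ℝ) ^ ((s i).val * a.val + (t i).val * a.val)]
  simp only [sum_neg_one_pow_mul_add_mul, Fintype.prod_ite_zero, ← funext_iff, prod_const,
    card_univ, Fintype.card_fin]

theorem sum_sq_sum_mul_walsh (T : Finset (Fin M → Fin 2)) (a : (Fin M → Fin 2) → ℝ) :
    ∑ y, (∑ s ∈ T, a s * walsh s y) ^ 2 = 2 ^ M * ∑ s ∈ T, a s ^ 2 := by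
  calc ∑ y, (∑ s ∈ T, a s * walsh s y) ^ 2
      = ∑ y, ∑ s ∈ T, ∑ t ∈ T, a s * a t * (walsh s y * walsh t y) :=
        sum_congr rfl fun y _ => by
          rw [sq, sum_mul_sum]
          exact sum_congr rfl fun s _ => sum_congr rfl fun t _ => by ring
    _ = ∑ s ∈ T, ∑ t ∈ T, a s * a t * ∑ y, walsh s y * walsh t y := by
        simp only [mul_sum]
        rw [sum_comm]
        exact sum_congr rfl fun s _ => sum_comm
    _ = 2 ^ M * ∑ s ∈ T, a s ^ 2 := by
        simp only [sum_walsh_mul_walsh, mul_ite, mul_zero, sum_ite_eq, mul_sum]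
        exact sum_congr rfl fun s hs => by rw [if_pos hs]; ring

theorem sum_walshCoeff_mul_walsh (f : (Fin M → Fin 2) → ℝ) (y : Fin M → Fin 2) :
    ∑ s, walshCoeff f s * walsh s y = f y := by
  calc ∑ s, walshCoeff f s * walsh s y
      = ((2 : ℝ) ^ M)⁻¹ * ∑ y', f y' * ∑ s, walsh y' s * walsh y s := by
        simp only [walshCoeff, mul_sum, sum_mul]
        rw [sum_comm]
        exact sum_congr rfl fun y' _ => sum_congr rfl fun s _ => by
          rw [walsh_comm s y', walsh_comm s y]; ring
    _ = f y := by
        simp only [sum_walsh_mul_walsh, mul_ite, mul_zero, sum_ite_eq', mem_univ, if_true]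
        field_simp

theorem sum_walshCoeff_sq (f : (Fin M → Fin 2) → ℝ) :
    ∑ s, walshCoeff f s ^ 2 = ((2 : ℝ) ^ M)⁻¹ * ∑ y, f y ^ 2 := by
  have h := sum_sq_sum_mul_walsh univ (walshCoeff f)
  simp only [sum_walshCoeff_mul_walsh] at h
  rw [h]
  field_simp

theorem mean_sq_sum_mul_walshCoeff_le (f : (Fin M → Fin 2) → ℝ) (T : Finset (Fin M → Fin 2))
    (c : (Fin M → Fin 2) → ℝ) {K : ℝ} (hK : 0 ≤ K) (hc : ∀ s ∈ T, c s ^ 2 ≤ K) :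
    ((2 : ℝ) ^ M)⁻¹ * ∑ y, (∑ s ∈ T, c s * walshCoeff f s * walsh s y) ^ 2
      ≤ K * (((2 : ℝ) ^ M)⁻¹ * ∑ y, f y ^ 2) := by
  rw [sum_sq_sum_mul_walsh, inv_mul_cancel_left₀ (by positivity), ← sum_walshCoeff_sq, mul_sum]
  calc ∑ s ∈ T, (c s * walshCoeff f s) ^ 2
      ≤ ∑ s ∈ T, K * walshCoeff f s ^ 2 :=
        sum_le_sum fun s hs => by
          rw [mul_pow]; exact mul_le_mul_of_nonneg_right (hc s hs) (sq_nonneg _)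
    _ ≤ ∑ s, K * walshCoeff f s ^ 2 :=
        sum_le_sum_of_subset_of_nonneg (subset_univ T) fun s _ _ => by positivity

end Walsh

open Walsh

theorem noisyFn_sub_truncFn {r M : ℕ} (ε : ℝ) (l : ℕ)
    (q : (Fin r → Fin 2) → (Fin M → Fin 2) → ℝ) (x : Fin r → Fin 2) (y : Fin M → Fin 2) :
    noisyFn ε q x y - truncFn ε l q x y
      = ∑ s ∈ univ.filter fun s => l ≤ hammingWt s,
          (1 - 2 * ε) ^ hammingWt s * walshCoeff (q x) s * walsh s y := by
  rw [noisyFn, truncFn, ← sum_filter_add_sum_filter_not univ fun s => hammingWt s < l,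
    add_sub_cancel_left]
  simp only [not_lt]
  -- `fourier2 q x` and `walshCoeff (q x)` agree by definition
  exact sum_congr rfl fun s _ => mul_right_comm _ _ _

theorem mean_sq_truncFn_sub_noisyFn_le {r M : ℕ} {ε : ℝ} (hε0 : 0 ≤ ε) (hε1 : ε ≤ 1) (l : ℕ)
    (q : (Fin r → Fin 2) → (Fin M → Fin 2) → ℝ) (x : Fin r → Fin 2) :
    ((2 : ℝ) ^ M)⁻¹ * ∑ y, (truncFn ε l q x y - noisyFn ε q x y) ^ 2
      ≤ (1 - 2 * ε) ^ (2 * l) * (((2 : ℝ) ^ M)⁻¹ * ∑ y, q x y ^ 2) := by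
  simp only [sub_sq_comm (truncFn ε l q x _), noisyFn_sub_truncFn]
  rw [pow_mul]
  refine mean_sq_sum_mul_walshCoeff_le (q x) _ _ (by positivity) fun s hs => ?_
  have hnoise : (1 - 2 * ε) ^ 2 ≤ 1 := by nlinarith
  rw [← pow_mul, mul_comm (hammingWt s) 2, pow_mul]
  exact pow_le_pow_of_le_one (sq_nonneg _) hnoise (mem_filter.mp hs).2

theorem sum_sq_sum_abs_le_card_mul_sum_sum_sq {X Y : Type*} [Fintype X] (t : Finset Y)
    (g : X → Y → ℝ) :
    ∑ y ∈ t, (∑ x, |g x y|) ^ 2 ≤ Fintype.card X * ∑ x, ∑ y ∈ t, g x y ^ 2 := by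
  rw [sum_comm, mul_sum]
  refine sum_le_sum fun y _ => ?_
  simpa only [sq_abs, card_univ] using sq_sum_le_card_mul_sum_sq (s := univ) (f := fun x => |g x y|)

theorem truncation_variance_bound_general (r M : ℕ) (l : ℕ)
    (ε : ℝ) (hε0 : 0 ≤ ε) (hε : ε ≤ 1 / 2)
    (q : (Fin r → Fin 2) → (Fin M → Fin 2) → ℝ) :
    ((2 : ℝ) ^ M)⁻¹ * ∑ y : Fin M → Fin 2,
        (∑ x : Fin r → Fin 2, |truncFn ε l q x y - noisyFn ε q x y|) ^ 2
      ≤ 2 ^ r * (1 - 2 * ε) ^ (2 * l) *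
          (((2 : ℝ) ^ M)⁻¹ * ∑ x : Fin r → Fin 2, ∑ y : Fin M → Fin 2, (q x y) ^ 2) := by
  have hcard : (Fintype.card (Fin r → Fin 2) : ℝ) = 2 ^ r := by simp
  calc ((2 : ℝ) ^ M)⁻¹ * ∑ y, (∑ x, |truncFn ε l q x y - noisyFn ε q x y|) ^ 2
      ≤ ((2 : ℝ) ^ M)⁻¹ * (2 ^ r * ∑ x, ∑ y, (truncFn ε l q x y - noisyFn ε q x y) ^ 2) := by
        rw [← hcard]
        gcongr
        exact sum_sq_sum_abs_le_card_mul_sum_sum_sq univ _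
    _ = 2 ^ r * ∑ x, ((2 : ℝ) ^ M)⁻¹ * ∑ y, (truncFn ε l q x y - noisyFn ε q x y) ^ 2 := by
        rw [mul_left_comm, mul_sum]
    _ ≤ 2 ^ r * ∑ x, (1 - 2 * ε) ^ (2 * l) * (((2 : ℝ) ^ M)⁻¹ * ∑ y, q x y ^ 2) := by
        have hε1 : ε ≤ 1 := by linarith
        gcongr 2 ^ r * ∑ x, ?_ with x
        exact mean_sq_truncFn_sub_noisyFn_le hε0 hε1 l q x
    _ = _ := by rw [← mul_sum, ← mul_sum, mul_assoc]

/-- Variance-type bound for truncating the Fourier series of a noisy function. -/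
theorem truncation_variance_bound (r M : ℕ) (hr : 0 < r) (hM : 0 < M) (l : ℕ)
    (ε : ℝ) (hε0 : 0 ≤ ε) (hε : ε ≤ 1 / 2)
    (q : (Fin r → Fin 2) → (Fin M → Fin 2) → ℝ) :
    ((2 : ℝ) ^ M)⁻¹ * ∑ y : Fin M → Fin 2,
        (∑ x : Fin r → Fin 2, |truncFn ε l q x y - noisyFn ε q x y|) ^ 2
      ≤ 2 ^ r * (1 - 2 * ε) ^ (2 * l) *
          (((2 : ℝ) ^ M)⁻¹ * ∑ x : Fin r → Fin 2, ∑ y : Fin M → Fin 2, (q x y) ^ 2) :=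
  truncation_variance_bound_general r M l ε hε0 hε q
end

section
/- Let r, M be positive natural numbers, let l ≥ 0, let ε ∈ ℝ with 0 ≤ ε ≤ 1/2, and let q : ({0,1}^r) × ({0,1}^M) → ℝ be any function. Define the binary Fourier transform in the second argument, q̂(x, s) = 2^{-M} · Σ_{y ∈ {0,1}^M} (-1)^{s·y} q(x, y). Define the noisy function q'(x, y) = Σ_{s ∈ {0,1}^M} (1-2ε)^{wt(s)} (-1)^{s·y} q̂(x, s) and the truncated pseudo-function p'(x, y) = Σ_{s ∈ {0,1}^M, wt(s) < l} (1-2ε)^{wt(s)} (-1)^{s·y} q̂(x, s). Then the mean-type bound holds: ( 2^{-M} · Σ_{y ∈ {0,1}^M} Σ_{x ∈ {0,1}^r} |p'(x, y) - q'(x, y)| )² ≤ 2^r · (1-2ε)^{2l} · ( 2^{-M} · Σ_{x ∈ {0,1}^r} Σ_{y ∈ {0,1}^M} q(x, y)² ). -/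
/-! Write `η = 1 - 2ε`. The error `q' - p'` is the part of the noisy Walsh expansion with
`wt s ≥ l`, whose coefficients are those of `q` damped by `η^{wt s}`, so `|η| ≤ 1` and Parseval
bound its `L²` norm in `y` by `η^l` times that of `q(x, ·)`. Cauchy–Schwarz over the `2^{r+M}`
pairs `(x, y)` then turns this into the bound on the mean absolute error. -/

noncomputable def walsh {M : ℕ} (s y : Fin M → Fin 2) : ℝ :=
  (-1 : ℝ) ^ (∑ i, (s i).val * (y i).val)

lemma walsh_comm {M : ℕ} (s y : Fin M → Fin 2) : walsh s y = walsh y s := by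
  simp only [walsh, Nat.mul_comm]

lemma sum_neg_one_pow_mul_add_mul (a b : Fin 2) :
    ∑ c : Fin 2, (-1 : ℝ) ^ (a.val * c.val + b.val * c.val) = if a = b then 2 else 0 := by
  fin_cases a <;> fin_cases b <;> norm_num [Fin.sum_univ_two]

/-- The sum over `y` factorises over the coordinates. -/
lemma sum_walsh_mul_walsh {M : ℕ} (s t : Fin M → Fin 2) :
    ∑ y, walsh s y * walsh t y = if s = t then (2 : ℝ) ^ M else 0 := by
  have hprod : ∀ y, walsh s y * walsh t y
      = ∏ i, (-1 : ℝ) ^ ((s i).val * (y i).val + (t i).val * (y i).val) := fun y => by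
    simp only [walsh, ← pow_add, ← Finset.sum_add_distrib, Finset.prod_pow_eq_pow_sum]
  simp only [hprod, ← Fintype.prod_sum (fun i (c : Fin 2) =>
    (-1 : ℝ) ^ ((s i).val * c.val + (t i).val * c.val)), sum_neg_one_pow_mul_add_mul]
  split_ifs with hst
  · simp [hst]
  · obtain ⟨i, hi⟩ := Function.ne_iff.mp hst
    exact Finset.prod_eq_zero (Finset.mem_univ i) (if_neg hi)

lemma sum_sq_sum_mul_of_orthogonal {ι κ : Type*} [Fintype κ] [DecidableEq ι]
    (f : ι → κ → ℝ) (K : ℝ) (hf : ∀ s t, ∑ y, f s y * f t y = if s = t then K else 0)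
    (S : Finset ι) (c : ι → ℝ) :
    ∑ y, (∑ s ∈ S, c s * f s y) ^ 2 = K * ∑ s ∈ S, c s ^ 2 := by
  calc ∑ y, (∑ s ∈ S, c s * f s y) ^ 2
      = ∑ s ∈ S, ∑ t ∈ S, c s * c t * ∑ y, f s y * f t y := by
        simp only [sq, Finset.sum_mul_sum]
        simp only [Finset.mul_sum]
        rw [Finset.sum_comm]
        refine Finset.sum_congr rfl fun s _ => ?_
        rw [Finset.sum_comm]
        exact Finset.sum_congr rfl fun t _ => Finset.sum_congr rfl fun y _ => by ring
    _ = K * ∑ s ∈ S, c s ^ 2 := by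
        simp only [hf, mul_ite, mul_zero, Finset.sum_ite_eq, Finset.mul_sum]
        exact Finset.sum_congr rfl fun s hs => by rw [if_pos hs]; ring

section Fourier

variable {r M : ℕ} (q : (Fin r → Fin 2) → (Fin M → Fin 2) → ℝ) (x : Fin r → Fin 2)

lemma fourier2_inversion (y : Fin M → Fin 2) : ∑ s, fourier2 q x s * walsh s y = q x y := by
  calc ∑ s, fourier2 q x s * walsh s y
      = ((2 : ℝ) ^ M)⁻¹ * ∑ y', q x y' * ∑ s, walsh y' s * walsh y s := by
        simp only [fourier2, Finset.mul_sum, Finset.sum_mul]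
        rw [Finset.sum_comm]
        refine Finset.sum_congr rfl fun y' _ => Finset.sum_congr rfl fun s _ => ?_
        rw [walsh_comm y' s, walsh_comm y s]
        simp only [walsh]
        ring
    _ = q x y := by
        simp only [sum_walsh_mul_walsh, mul_ite, mul_zero, Finset.sum_ite_eq', Finset.mem_univ,
          if_true]
        field_simp

lemma fourier2_parseval : ∑ y, q x y ^ 2 = 2 ^ M * ∑ s, fourier2 q x s ^ 2 := by
  simp only [← sum_sq_sum_mul_of_orthogonal walsh _ sum_walsh_mul_walsh, fourier2_inversion]

end Fourier

lemma sum_sq_truncFn_sub_noisyFn_le {r M : ℕ} (l : ℕ) {ε : ℝ} (hε0 : 0 ≤ ε) (hε1 : ε ≤ 1)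
    (q : (Fin r → Fin 2) → (Fin M → Fin 2) → ℝ) (x : Fin r → Fin 2) :
    ∑ y, (truncFn ε l q x y - noisyFn ε q x y) ^ 2
      ≤ (1 - 2 * ε) ^ (2 * l) * ∑ y, q x y ^ 2 := by
  set η := 1 - 2 * ε
  set S := Finset.univ.filter fun s : Fin M → Fin 2 => ¬ hammingWt s < l
  have hη : η ^ 2 ≤ 1 := by rw [sq_le_one_iff_abs_le_one, abs_le]; constructor <;> linarith
  have htail : ∀ y, noisyFn ε q x y - truncFn ε l q x y
      = ∑ s ∈ S, η ^ hammingWt s * fourier2 q x s * walsh s y := fun y => by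
    rw [noisyFn, truncFn, ← Finset.sum_filter_add_sum_filter_not Finset.univ
      (fun s => hammingWt s < l), add_sub_cancel_left]
    exact Finset.sum_congr rfl fun s _ => by rw [walsh]; ring
  calc ∑ y, (truncFn ε l q x y - noisyFn ε q x y) ^ 2
      = 2 ^ M * ∑ s ∈ S, (η ^ hammingWt s * fourier2 q x s) ^ 2 := by
        simp only [sub_sq_comm (truncFn _ _ _ _ _), htail]
        exact sum_sq_sum_mul_of_orthogonal walsh _ sum_walsh_mul_walsh S _
    _ ≤ 2 ^ M * ∑ s ∈ S, η ^ (2 * l) * fourier2 q x s ^ 2 := by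
        gcongr with s hs
        rw [mul_pow, ← pow_mul, mul_comm _ 2, pow_mul, pow_mul]
        refine mul_le_mul_of_nonneg_right ?_ (sq_nonneg _)
        exact pow_le_pow_of_le_one (sq_nonneg η) hη (not_lt.mp (Finset.mem_filter.mp hs).2)
    _ ≤ 2 ^ M * ∑ s, η ^ (2 * l) * fourier2 q x s ^ 2 := by
        gcongr
        · exact fun s _ _ => mul_nonneg (by rw [pow_mul]; positivity) (sq_nonneg _)
        · exact Finset.subset_univ S
    _ = η ^ (2 * l) * ∑ y, q x y ^ 2 := by
        rw [fourier2_parseval, ← Finset.mul_sum]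
        ring

lemma sq_sum_sum_abs_le {α β : Type*} [Fintype α] [Fintype β] (f : α → β → ℝ) :
    (∑ a, ∑ b, |f a b|) ^ 2 ≤ Fintype.card α * Fintype.card β * ∑ a, ∑ b, f a b ^ 2 := by
  simpa only [← Fintype.sum_prod_type', sq_abs, Finset.card_univ, Fintype.card_prod,
    Nat.cast_mul] using
    sq_sum_le_card_mul_sum_sq (s := Finset.univ) (f := fun p : α × β => |f p.1 p.2|)

theorem truncation_mean_bound_general (r M : ℕ) (l : ℕ)
    (ε : ℝ) (hε0 : 0 ≤ ε) (hε : ε ≤ 1 / 2)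
    (q : (Fin r → Fin 2) → (Fin M → Fin 2) → ℝ) :
    (((2 : ℝ) ^ M)⁻¹ * ∑ y : Fin M → Fin 2,
        ∑ x : Fin r → Fin 2, |truncFn ε l q x y - noisyFn ε q x y|) ^ 2
      ≤ 2 ^ r * (1 - 2 * ε) ^ (2 * l) *
          (((2 : ℝ) ^ M)⁻¹ * ∑ x : Fin r → Fin 2, ∑ y : Fin M → Fin 2, (q x y) ^ 2) := by
  have hcard : ∀ n : ℕ, (Fintype.card (Fin n → Fin 2) : ℝ) = 2 ^ n := by simp
  calc (((2 : ℝ) ^ M)⁻¹ * ∑ y, ∑ x, |truncFn ε l q x y - noisyFn ε q x y|) ^ 2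
      = ((2 : ℝ) ^ M)⁻¹ ^ 2 * (∑ x, ∑ y, |truncFn ε l q x y - noisyFn ε q x y|) ^ 2 := by
        rw [mul_pow, Finset.sum_comm]
    _ ≤ ((2 : ℝ) ^ M)⁻¹ ^ 2 *
          (2 ^ r * 2 ^ M * ∑ x, ∑ y, (truncFn ε l q x y - noisyFn ε q x y) ^ 2) := by
        gcongr
        simpa only [hcard] using sq_sum_sum_abs_le fun x y => truncFn ε l q x y - noisyFn ε q x y
    _ ≤ ((2 : ℝ) ^ M)⁻¹ ^ 2 *
          (2 ^ r * 2 ^ M * ∑ x, (1 - 2 * ε) ^ (2 * l) * ∑ y, q x y ^ 2) := by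
        gcongr with x
        exact sum_sq_truncFn_sub_noisyFn_le l hε0 (by linarith) q x
    _ = 2 ^ r * (1 - 2 * ε) ^ (2 * l) * (((2 : ℝ) ^ M)⁻¹ * ∑ x, ∑ y, q x y ^ 2) := by
        rw [← Finset.mul_sum]
        field_simp

/-- Mean-type bound for truncating the Fourier series of a noisy function. -/
theorem truncation_mean_bound (r M : ℕ) (hr : 0 < r) (hM : 0 < M) (l : ℕ)
    (ε : ℝ) (hε0 : 0 ≤ ε) (hε : ε ≤ 1 / 2)
    (q : (Fin r → Fin 2) → (Fin M → Fin 2) → ℝ) :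
    (((2 : ℝ) ^ M)⁻¹ * ∑ y : Fin M → Fin 2,
        ∑ x : Fin r → Fin 2, |truncFn ε l q x y - noisyFn ε q x y|) ^ 2
      ≤ 2 ^ r * (1 - 2 * ε) ^ (2 * l) *
          (((2 : ℝ) ^ M)⁻¹ * ∑ x : Fin r → Fin 2, ∑ y : Fin M → Fin 2, (q x y) ^ 2) :=
  truncation_mean_bound_general r M l ε hε0 hε q
end

section
/- Define F : ℝ³ → ℝ³ by F(ε₁, ε₂, ε₃) = (ε_z, ε_x, ε_y) with ε_z = ε₁(1-ε₂)(1-ε₃) + (1-ε₁)ε₂ε₃, ε_x = ε₂(1-ε₁)(1-ε₃) + (1-ε₂)ε₁ε₃, and ε_y = ε₃(1-ε₁)(1-ε₂) + (1-ε₃)ε₁ε₂. Then F is differentiable at every point, and the determinant of its derivative (the Jacobian determinant) at the point (ε₁, ε₂, ε₃) equals (1-2ε₁)(1-2ε₂)(1-2ε₃). -/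
/-- The map sending the rates `(ε₁, ε₂, ε₃)` of three composed single-Pauli error channels
(`Z`-type, then `X`-type, then `Y`-type) to the coefficients `(ε_z, ε_x, ε_y)` of the
resulting mixed Pauli channel. -/
noncomputable def pauliRateMap : ℝ × ℝ × ℝ → ℝ × ℝ × ℝ := fun p =>
  (p.1 * (1 - p.2.1) * (1 - p.2.2) + (1 - p.1) * p.2.1 * p.2.2,
   p.2.1 * (1 - p.1) * (1 - p.2.2) + (1 - p.2.1) * p.1 * p.2.2,
   p.2.2 * (1 - p.1) * (1 - p.2.1) + (1 - p.2.2) * p.1 * p.2.1)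

namespace Module.Basis

variable (R : Type*) [Semiring R]

noncomputable def finThreeProd : Basis (Fin 3) R (R × R × R) :=
  .ofEquivFun <|
    ((LinearEquiv.refl R R).prodCongr (LinearEquiv.finTwoArrow R R).symm).trans
      (Fin.consLinearEquiv R fun _ => R)

variable {R}

@[simp]
theorem finThreeProd_repr (x : R × R × R) :
    ⇑((finThreeProd R).repr x) = ![x.1, x.2.1, x.2.2] := by
  ext i; fin_cases i <;> rfl

@[simp]
theorem finThreeProd_zero : finThreeProd R 0 = (1, 0, 0) := by
  simp [finThreeProd, LinearEquiv.finTwoArrow, Fin.tail]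

@[simp]
theorem finThreeProd_one : finThreeProd R 1 = (0, 1, 0) := by
  simp [finThreeProd, LinearEquiv.finTwoArrow, Fin.tail]

@[simp]
theorem finThreeProd_two : finThreeProd R 2 = (0, 0, 1) := by
  simp [finThreeProd, LinearEquiv.finTwoArrow, Fin.tail]

end Module.Basis

open Module

/-- Each component of `pauliRateMap` is affine in each variable separately, so its partial
derivatives are differences such as `(1 - ε₂)(1 - ε₃) - ε₂ε₃ = 1 - ε₂ - ε₃`. -/
def pauliJacobian (p : ℝ × ℝ × ℝ) : Matrix (Fin 3) (Fin 3) ℝ :=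
  let (a, b, c) := p
  !![1 - b - c, c - a, b - a;
     c - b, 1 - a - c, a - b;
     b - c, a - c, 1 - a - b]

theorem hasFDerivAt_pauliRateMap (p : ℝ × ℝ × ℝ) :
    HasFDerivAt pauliRateMap
      (Matrix.toLin (Basis.finThreeProd ℝ) (Basis.finThreeProd ℝ)
        (pauliJacobian p)).toContinuousLinearMap p := by
  have h1 := hasFDerivAt_fst (𝕜 := ℝ) (p := p)
  have h2 := (hasFDerivAt_snd (𝕜 := ℝ) (p := p)).fst
  have h3 := (hasFDerivAt_snd (𝕜 := ℝ) (p := p)).snd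
  have H := HasFDerivAt.prodMk (((h1.mul (h2.const_sub 1)).mul (h3.const_sub 1)).add
      (((h1.const_sub 1).mul h2).mul h3))
    (HasFDerivAt.prodMk (((h2.mul (h1.const_sub 1)).mul (h3.const_sub 1)).add
      (((h2.const_sub 1).mul h1).mul h3))
     (((h3.mul (h1.const_sub 1)).mul (h2.const_sub 1)).add
      (((h3.const_sub 1).mul h1).mul h2)))
  refine H.congr_fderiv (ContinuousLinearMap.ext fun q => ?_)
  simp only [Pi.mul_apply, ContinuousLinearMap.prod_apply, add_apply, neg_apply, smul_apply,
    ContinuousLinearMap.comp_apply, ContinuousLinearMap.coe_fst', ContinuousLinearMap.coe_snd',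
    smul_eq_mul, smul_neg, smul_add, pauliJacobian, LinearMap.coe_toContinuousLinearMap',
    Matrix.toLin_apply, Basis.finThreeProd_repr, Matrix.mulVec_cons, Matrix.mulVec_empty,
    add_zero, Pi.add_apply, Pi.smul_apply, Function.comp_apply, Fin.sum_univ_three,
    Matrix.cons_val_zero, Matrix.cons_val_one, Matrix.cons_val, Matrix.head_cons,
    Matrix.tail_cons, Basis.finThreeProd_zero, Basis.finThreeProd_one, Basis.finThreeProd_two,
    Prod.smul_mk, mul_one, mul_zero, Prod.mk_add_mk, zero_add, Prod.mk.injEq]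
  refine ⟨?_, ?_, ?_⟩ <;> ring

theorem det_pauliJacobian (p : ℝ × ℝ × ℝ) :
    (pauliJacobian p).det = (1 - 2 * p.1) * (1 - 2 * p.2.1) * (1 - 2 * p.2.2) := by
  simp only [pauliJacobian, Matrix.det_fin_three, Matrix.of_apply, Matrix.cons_val',
    Matrix.cons_val_zero, Matrix.cons_val_one, Matrix.cons_val_two, Matrix.empty_val',
    Matrix.cons_val_fin_one, Matrix.head_cons, Matrix.tail_cons, Matrix.head_fin_const]
  ring

/-- `pauliRateMap` is differentiable everywhere and its Jacobian determinant at
`(ε₁, ε₂, ε₃)` equals `(1-2ε₁)(1-2ε₂)(1-2ε₃)`. -/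
theorem pauliRateMap_jacobian (p : ℝ × ℝ × ℝ) :
    DifferentiableAt ℝ pauliRateMap p ∧
      LinearMap.det ((fderiv ℝ pauliRateMap p) : (ℝ × ℝ × ℝ) →ₗ[ℝ] (ℝ × ℝ × ℝ))
        = (1 - 2 * p.1) * (1 - 2 * p.2.1) * (1 - 2 * p.2.2) := by
  have hF := hasFDerivAt_pauliRateMap p
  refine ⟨hF.differentiableAt, ?_⟩
  rw [hF.fderiv, LinearMap.coe_toContinuousLinearMap, LinearMap.det_toLin, det_pauliJacobian]
end
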